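/- arXiv:1205.6019 — 2 statements merged into one kernel-verified Lean document; each statement's English description precedes it below -/
import Mathlib

section
/- Let φ be a finite Blaschke product with φ(0) = 0. Then the restriction of φ to the unit circle 𝕋 preserves normalized Lebesgue measure m: for every Borel set A ⊆ 𝕋, m(φ^{-1}(A)) = m(A). -/
open Filter Metric Set

noncomputable section

/-- `φ` is a finite Blaschke product with `N` factors. -/
def IsBlaschkeOf (N : ℕ) (φ : ℂ → ℂ) : Prop :=
  ∃ (u : ℂ) (a : Fin N → ℂ), ‖u‖ = 1 ∧ (∀ i, ‖a i‖ < 1) ∧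
    ∀ z : ℂ, φ z = u * ∏ i, (z - a i) / (1 - (starRingEnd ℂ) (a i) * z)

/-- `φ` is a nontrivial finite Blaschke product (at least two factors). -/
def NontrivialBlaschke (φ : ℂ → ℂ) : Prop := ∃ N : ℕ, 2 ≤ N ∧ IsBlaschkeOf N φ

/-- `φ` is elliptic: it has a fixed point in the open unit disk. -/
def Elliptic (φ : ℂ → ℂ) : Prop := ∃ z ∈ ball (0 : ℂ) 1, φ z = z

/-- `φ` is parabolic with (Denjoy–Wolff) fixed point `z₀ ∈ 𝕋`, `φ'(z₀) = 1`. -/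
def ParabolicAt (φ : ℂ → ℂ) (z₀ : ℂ) : Prop :=
  z₀ ∈ sphere (0 : ℂ) 1 ∧ φ z₀ = z₀ ∧ deriv φ z₀ = 1

def Parabolic (φ : ℂ → ℂ) : Prop := ∃ z₀ : ℂ, ParabolicAt φ z₀

/-- `φ` is hyperbolic with (Denjoy–Wolff) fixed point `z₀ ∈ 𝕋`, `0 < φ'(z₀) < 1`. -/
def HyperbolicAt (φ : ℂ → ℂ) (z₀ : ℂ) : Prop :=
  z₀ ∈ sphere (0 : ℂ) 1 ∧ φ z₀ = z₀ ∧ ∃ c : ℝ, 0 < c ∧ c < 1 ∧ deriv φ z₀ = (c : ℂ)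

def Hyperbolic (φ : ℂ → ℂ) : Prop := ∃ z₀ : ℂ, HyperbolicAt φ z₀

/-- The hyperbolic (pseudo-)distance on the unit disk. -/
def hypDist (z w : ℂ) : ℝ :=
  Real.log ((1 + ‖z - w‖ / ‖1 - (starRingEnd ℂ) z * w‖) /
    (1 - ‖z - w‖ / ‖1 - (starRingEnd ℂ) z * w‖))

/-- `φ` has zero hyperbolic step. -/
def ZeroHypStep (φ : ℂ → ℂ) : Prop :=
  ∃ z ∈ ball (0 : ℂ) 1,
    Tendsto (fun n : ℕ => hypDist (φ^[n] z) (φ^[n + 1] z)) atTop (nhds 0)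

/-- `φ` has positive hyperbolic step. -/
def PosHypStep (φ : ℂ → ℂ) : Prop :=
  ∀ z ∈ ball (0 : ℂ) 1,
    ¬ Tendsto (fun n : ℕ => hypDist (φ^[n] z) (φ^[n + 1] z)) atTop (nhds 0)

/-- `z` is a recurrent point of `φ` on the unit circle. -/
def RecurrentPt (φ : ℂ → ℂ) (z : ℂ) : Prop :=
  z ∈ sphere (0 : ℂ) 1 ∧ ∃ n : ℕ → ℕ, StrictMono n ∧ (∀ k, 0 < n k) ∧
    Tendsto (fun k => φ^[n k] z) atTop (nhds z)

/-- `f` belongs to the disk algebra `A(𝔻)`. -/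
def MemDiskAlgebra (f : ℂ → ℂ) : Prop :=
  ContinuousOn f (closedBall (0 : ℂ) 1) ∧ DifferentiableOn ℂ f (ball (0 : ℂ) 1)

/-- Normalized Lebesgue measure on the unit circle, viewed as a Borel measure on `ℂ`:
the pushforward of Lebesgue measure on `[0,1)` under `t ↦ exp(2πit)`. -/
def circleMeasure : MeasureTheory.Measure ℂ :=
  MeasureTheory.Measure.map (fun t : ℝ => Complex.exp (2 * Real.pi * Complex.I * (t : ℂ)))
    (MeasureTheory.volume.restrict (Set.Ico (0 : ℝ) 1))

/-!
On `𝕋` a finite Blaschke product `φ` with `φ 0 = 0` is unimodular, so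
`φ ^ j * conj φ ^ k = φ ^ (j - k)` for `k ≤ j`, and the mean value property of the holomorphic
function `φ ^ (j - k)` gives `∫ φ ^ j * conj φ ^ k dm = φ 0 ^ (j - k) = δ j k`, exactly the moments
of the identity map. Hence the image measure `φ₊ m` and `m` agree on all polynomials in `z` and
`conj z`; these are dense in `C(𝕋)` by Stone–Weierstrass, so `φ₊ m = m`.
-/

open MeasureTheory BoundedContinuousFunction

theorem ext_of_forall_integral_pow_mul_conj_pow_eq {E : Type*} [TopologicalSpace E] [PolishSpace E]
    [MeasurableSpace E] [BorelSpace E] {P P' : Measure E} [IsFiniteMeasure P] [IsFiniteMeasure P']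
    (Z : E →ᵇ ℂ) (hZ : Function.Injective Z)
    (h : ∀ j k : ℕ, ∫ x, Z x ^ j * (starRingEnd ℂ) (Z x) ^ k ∂P =
      ∫ x, Z x ^ j * (starRingEnd ℂ) (Z x) ^ k ∂P') :
    P = P' := by
  refine ext_of_forall_mem_subalgebra_integral_eq_of_polish (A := StarAlgebra.adjoin ℂ {Z})
    ?_ fun g hgA => ?_
  · intro x y hxy
    have hZA : Z ∈ StarAlgebra.adjoin ℂ {Z} := StarAlgebra.subset_adjoin ℂ _ (mem_singleton Z)
    exact ⟨Z, ⟨_, StarSubalgebra.mem_map.2 ⟨Z, hZA, rfl⟩, rfl⟩, fun h => hxy (hZ h)⟩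
  · have hg' : g ∈ Submodule.span ℂ (Submonoid.closure {Z, star Z} : Set (E →ᵇ ℂ)) := by
      rw [← singleton_union, ← star_singleton, ← StarAlgebra.adjoin_eq_span]
      exact hgA
    clear hgA
    induction hg' using Submodule.span_induction with
    | mem g hmon =>
      obtain ⟨j, k, rfl⟩ := (Submonoid.mem_closure_pair _ _ _).1 hmon
      simpa using h j k
    | zero => simp
    | add g g' _ _ ih ih' =>
      simp only [coe_add, Pi.add_apply]
      rw [integral_add (g.integrable P) (g'.integrable P),
        integral_add (g.integrable P') (g'.integrable P'), ih, ih']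
    | smul c g _ ih =>
      simp only [coe_smul, smul_eq_mul]
      rw [integral_const_mul, integral_const_mul, ih]

local notation "𝕋" => sphere (0 : ℂ) 1

lemma exp_two_pi_mul_I_mem_sphere (t : ℝ) :
    Complex.exp (2 * Real.pi * Complex.I * t) ∈ 𝕋 := by
  simp [Complex.norm_exp, Complex.mul_re, Complex.mul_im]

instance : IsProbabilityMeasure circleMeasure :=
  have : IsProbabilityMeasure (volume.restrict (Ico (0 : ℝ) 1)) := ⟨by simp⟩
  Measure.isProbabilityMeasure_map (by fun_prop)

lemma circleMeasure_compl_sphere : circleMeasure 𝕋ᶜ = 0 := by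
  rw [circleMeasure, Measure.map_apply (by fun_prop) isClosed_sphere.measurableSet.compl,
    preimage_compl, preimage_eq_univ_iff.2 fun _ ⟨t, ht⟩ => ht ▸ exp_two_pi_mul_I_mem_sphere t]
  simp

lemma ae_mem_sphere_circleMeasure : ∀ᵐ z ∂circleMeasure, z ∈ 𝕋 :=
  mem_ae_iff.2 circleMeasure_compl_sphere

-- On the compact space `𝕋` the coordinate `z` is a bounded continuous function.
def sphereMeasure : Measure 𝕋 := circleMeasure.comap (↑)

instance : IsFiniteMeasure sphereMeasure := by
  rw [sphereMeasure]
  infer_instance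

lemma measurableEmbedding_coe_sphere : MeasurableEmbedding ((↑) : 𝕋 → ℂ) :=
  .subtype_coe isClosed_sphere.measurableSet

lemma map_coe_sphereMeasure : sphereMeasure.map (↑) = circleMeasure := by
  rw [sphereMeasure, measurableEmbedding_coe_sphere.map_comap, Subtype.range_coe]
  exact Measure.restrict_eq_self_of_ae_mem ae_mem_sphere_circleMeasure

lemma integral_sphereMeasure {E : Type*} [NormedAddCommGroup E] [NormedSpace ℝ E] (g : ℂ → E) :
    ∫ z, g z ∂sphereMeasure = ∫ z, g z ∂circleMeasure := by
  rw [← map_coe_sphereMeasure, measurableEmbedding_coe_sphere.integral_map]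

lemma aestronglyMeasurable_circleMeasure {E : Type*} [TopologicalSpace E]
    [TopologicalSpace.PseudoMetrizableSpace E] {g : ℂ → E} (hg : ContinuousOn g 𝕋) :
    AEStronglyMeasurable g circleMeasure := by
  rw [← map_coe_sphereMeasure, measurableEmbedding_coe_sphere.aestronglyMeasurable_map_iff]
  exact hg.domRestrict.aestronglyMeasurable

lemma integral_circleMeasure_eq_circleAverage {E : Type*} [NormedAddCommGroup E]
    [NormedSpace ℝ E] {g : ℂ → E} (hg : ContinuousOn g 𝕋) :
    ∫ z, g z ∂circleMeasure = Real.circleAverage g 0 1 := by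
  have hexp (t : ℝ) :
      Complex.exp (2 * Real.pi * Complex.I * t) = circleMap 0 1 (2 * Real.pi * t) := by
    simp [circleMap, mul_right_comm _ Complex.I]
  have hmeas := aestronglyMeasurable_circleMeasure hg
  rw [circleMeasure] at hmeas ⊢
  rw [integral_map (by fun_prop) hmeas, integral_Ico_eq_integral_Ioo,
    ← integral_Ioc_eq_integral_Ioo, ← intervalIntegral.integral_of_le zero_le_one]
  simp only [hexp]
  rw [intervalIntegral.integral_comp_mul_left (fun θ => g (circleMap 0 1 θ)) (by positivity),
    mul_zero, mul_one, Real.circleAverage_def]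

theorem DiffContOnCl.integral_circleMeasure {E : Type*} [NormedAddCommGroup E] [NormedSpace ℂ E]
    [CompleteSpace E] {f : ℂ → E} (hf : DiffContOnCl ℂ f (ball 0 1)) :
    ∫ z, f z ∂circleMeasure = f 0 := by
  have hf' : DiffContOnCl ℂ f (ball 0 |1|) := by rwa [abs_one]
  rw [integral_circleMeasure_eq_circleAverage
    (hf.continuousOn_ball.mono sphere_subset_closedBall), hf'.circleAverage]

lemma pow_mul_conj_pow_of_norm_eq_one {w : ℂ} (hw : ‖w‖ = 1) {j k : ℕ} (hkj : k ≤ j) :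
    w ^ j * (starRingEnd ℂ) w ^ k = w ^ (j - k) := by
  rw [← Complex.inv_eq_conj hw, inv_pow, pow_sub₀ w (by simp [← norm_ne_zero_iff, hw]) hkj]

theorem integral_pow_mul_conj_pow_circleMeasure {f : ℂ → ℂ} (hf : DiffContOnCl ℂ f (ball 0 1))
    (hT : MapsTo f 𝕋 𝕋) (h0 : f 0 = 0) (j k : ℕ) :
    ∫ z, f z ^ j * (starRingEnd ℂ) (f z) ^ k ∂circleMeasure = if j = k then 1 else 0 := by
  wlog hkj : k ≤ j generalizing j k
  · rw [← Complex.conj_conj (∫ _, _ ∂_), ← integral_conj]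
    simp only [map_mul, map_pow, Complex.conj_conj, mul_comm ((starRingEnd ℂ) (f _) ^ j)]
    rw [this k j (le_of_not_ge hkj)]
    simp [eq_comm]
  calc ∫ z, f z ^ j * (starRingEnd ℂ) (f z) ^ k ∂circleMeasure
      = ∫ z, f z ^ (j - k) ∂circleMeasure := by
        refine integral_congr_ae (ae_mem_sphere_circleMeasure.mono fun z hz => ?_)
        exact pow_mul_conj_pow_of_norm_eq_one (mem_sphere_zero_iff_norm.1 (hT hz)) hkj
    _ = f 0 ^ (j - k) :=
        ((differentiable_pow (j - k)).comp_diffContOnCl hf).integral_circleMeasure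
    _ = if j = k then 1 else 0 := by
        rcases hkj.eq_or_lt with rfl | hlt
        · simp
        · rw [h0, zero_pow (by omega), if_neg hlt.ne']

theorem map_circleMeasure_of_mapsTo_sphere {f : ℂ → ℂ} (hf : DiffContOnCl ℂ f (ball 0 1))
    (hT : MapsTo f 𝕋 𝕋) (h0 : f 0 = 0) : circleMeasure.map f = circleMeasure := by
  have hcont : ContinuousOn f 𝕋 := hf.continuousOn_ball.mono sphere_subset_closedBall
  have hfT : Continuous (hT.restrict f 𝕋 𝕋) := hcont.mapsToRestrict hT
  have key : sphereMeasure.map (hT.restrict f 𝕋 𝕋) = sphereMeasure := by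
    refine ext_of_forall_integral_pow_mul_conj_pow_eq
      (.mkOfCompact ⟨(↑), continuous_subtype_val⟩) Subtype.val_injective fun j k => ?_
    rw [integral_map hfT.aemeasurable (Continuous.aestronglyMeasurable (by fun_prop))]
    simp only [mkOfCompact_apply, ContinuousMap.coe_mk, MapsTo.val_restrict_apply]
    rw [integral_sphereMeasure (fun z => f z ^ j * (starRingEnd ℂ) (f z) ^ k),
      integral_sphereMeasure (fun z => z ^ j * (starRingEnd ℂ) z ^ k),
      integral_pow_mul_conj_pow_circleMeasure hf hT h0,
      ← integral_pow_mul_conj_pow_circleMeasure (f := id) differentiable_id.diffContOnCl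
        (mapsTo_id _) rfl]
    rfl
  calc circleMeasure.map f = (sphereMeasure.map (↑)).map f := by rw [map_coe_sphereMeasure]
    _ = sphereMeasure.map (f ∘ (↑)) := by
        refine AEMeasurable.map_map_of_aemeasurable ?_ measurable_subtype_coe.aemeasurable
        rw [map_coe_sphereMeasure]
        exact (aestronglyMeasurable_circleMeasure hcont).aemeasurable
    _ = (sphereMeasure.map (hT.restrict f 𝕋 𝕋)).map (↑) :=
        (Measure.map_map measurable_subtype_coe hfT.measurable).symm
    _ = circleMeasure := by rw [key, map_coe_sphereMeasure]

lemma one_sub_conj_mul_ne_zero {a z : ℂ} (ha : ‖a‖ < 1) (hz : ‖z‖ ≤ 1) :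
    1 - starRingEnd ℂ a * z ≠ 0 := by
  refine sub_ne_zero.2 (ne_of_apply_ne norm ?_)
  rw [norm_one, norm_mul, Complex.norm_conj]
  exact (mul_lt_one_of_nonneg_of_lt_one_left (norm_nonneg a) ha hz).ne'

lemma norm_one_sub_conj_mul_eq_norm_sub {a z : ℂ} (hz : ‖z‖ = 1) :
    ‖1 - starRingEnd ℂ a * z‖ = ‖z - a‖ := by
  calc ‖1 - starRingEnd ℂ a * z‖ = ‖z * starRingEnd ℂ (z - a)‖ := by
        rw [map_sub, mul_sub, Complex.mul_conj, Complex.normSq_eq_norm_sq, hz, mul_comm z]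
        norm_num
    _ = ‖z - a‖ := by rw [norm_mul, Complex.norm_conj, hz, one_mul]

lemma norm_blaschke_factor_eq_one {a z : ℂ} (ha : ‖a‖ < 1) (hz : ‖z‖ = 1) :
    ‖(z - a) / (1 - starRingEnd ℂ a * z)‖ = 1 := by
  rw [norm_div, ← norm_one_sub_conj_mul_eq_norm_sub hz,
    div_self (norm_ne_zero_iff.2 (one_sub_conj_mul_ne_zero ha hz.le))]

namespace IsBlaschkeOf

variable {N : ℕ} {φ : ℂ → ℂ}

theorem diffContOnCl (h : IsBlaschkeOf N φ) : DiffContOnCl ℂ φ (ball 0 1) := by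
  obtain ⟨u, a, -, ha, hφ⟩ := h
  rw [funext hφ]
  refine DifferentiableOn.diffContOnCl_ball (U := closedBall 0 1) ?_ subset_rfl
  refine (differentiableOn_const u).mul (DifferentiableOn.fun_finsetProd fun i _ => ?_)
  exact DifferentiableOn.div (by fun_prop) (by fun_prop)
    fun z hz => one_sub_conj_mul_ne_zero (ha i) (mem_closedBall_zero_iff.1 hz)

theorem mapsTo_sphere (h : IsBlaschkeOf N φ) : MapsTo φ 𝕋 𝕋 := by
  obtain ⟨u, a, hu, ha, hφ⟩ := h
  intro z hz
  rw [mem_sphere_zero_iff_norm] at hz ⊢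
  rw [hφ, norm_mul, hu, norm_prod,
    Finset.prod_eq_one fun i _ => norm_blaschke_factor_eq_one (ha i) hz, one_mul]

end IsBlaschkeOf

/-- a finite Blaschke product fixing `0` preserves normalized Lebesgue
measure on the unit circle. -/
theorem blaschke_measure_preserving (φ : ℂ → ℂ) (hφ : ∃ N : ℕ, 1 ≤ N ∧ IsBlaschkeOf N φ)
    (h0 : φ 0 = 0) :
    ∀ A : Set ℂ, A ⊆ sphere (0 : ℂ) 1 → MeasurableSet A →
      circleMeasure (φ ⁻¹' A) = circleMeasure A := by
  obtain ⟨N, -, hN⟩ := hφ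
  intro A _ hA
  have hcont : ContinuousOn φ 𝕋 :=
    hN.diffContOnCl.continuousOn_ball.mono sphere_subset_closedBall
  rw [← Measure.map_apply_of_aemeasurable
      (aestronglyMeasurable_circleMeasure hcont).aemeasurable hA,
    map_circleMeasure_of_mapsTo_sphere hN.diffContOnCl hN.mapsTo_sphere h0]
end
end

section
/- Let φ be a nontrivial finite Blaschke product and let f ∈ A(𝔻) be a function which does not vanish identically on the set of recurrent points of φ on 𝕋. Then there exist an integer n ≥ 1 and a point x₀ ∈ 𝕋 with φ^n(x₀) = x₀ and f(x₀) ≠ 0; consequently there exists n ≥ 1 such that liminf_{k→∞} ( sup_{x ∈ 𝕋} ∏_{j=0}^{k−1} |f(φ^{jn}(x))| )^{1/k} > 0. -/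
open Filter Metric Set

noncomputable section

/-!
Parametrize the circle by `t ↦ exp (2πit)`. The argument of each Blaschke factor increases at the
rate of a Poisson kernel, so a Blaschke product with `N` factors lifts to a continuous
nondecreasing `G : ℝ → ℝ` with `G (t + 1) = G t + d` for an integer `d ≥ N ≥ 2`. The limit
`h t = lim G^[n] t / d ^ n` semiconjugates `G` to `t ↦ d t` and is monotone. Near a recurrent
point `t`, either `h` is nonconstant, and then the fibre of `h` over a nearby periodic point of
`t ↦ d t` modulo `1` contains a periodic point of `G` modulo `1`; or `h` is constant, and then
all returns of `t` are iterates of one monotone map `G^[r] - c`, so that `t` itself is periodic.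
The periodic point `x₀` bounds the liminf from below by `‖f x₀‖`.
-/
open scoped Real ComplexConjugate Topology
open Complex (I)
open Function (IsFixedPt IsPeriodicPt minimalPeriod isPeriodicPt_minimalPeriod)

def expTwoPiI (t : ℝ) : ℂ := Complex.exp (2 * π * I * t)

lemma expTwoPiI_eq_exp_mul_I (t : ℝ) : expTwoPiI t = Complex.exp ((2 * π * t : ℝ) * I) := by
  rw [expTwoPiI]; push_cast; ring_nf

@[simp]
lemma expTwoPiI_zero : expTwoPiI 0 = 1 := by simp [expTwoPiI]

lemma expTwoPiI_add (s t : ℝ) : expTwoPiI (s + t) = expTwoPiI s * expTwoPiI t := by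
  simp only [expTwoPiI, ← Complex.exp_add]; push_cast; ring_nf

lemma expTwoPiI_neg_mul_self (t : ℝ) : expTwoPiI (-t) * expTwoPiI t = 1 := by
  rw [← expTwoPiI_add, neg_add_cancel, expTwoPiI_zero]

lemma norm_expTwoPiI (t : ℝ) : ‖expTwoPiI t‖ = 1 := by
  rw [expTwoPiI_eq_exp_mul_I, Complex.norm_exp_ofReal_mul_I]

lemma expTwoPiI_mem_sphere (t : ℝ) : expTwoPiI t ∈ sphere (0 : ℂ) 1 := by
  simp [norm_expTwoPiI]

lemma expTwoPiI_eq_expTwoPiI_iff {s t : ℝ} : expTwoPiI s = expTwoPiI t ↔ ∃ m : ℤ, s = t + m := by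
  rw [expTwoPiI, expTwoPiI, Complex.exp_eq_exp_iff_exists_int]
  refine exists_congr fun m => ⟨fun h => ?_, fun h => by rw [h]; push_cast; ring⟩
  have h2πI : 2 * π * I ≠ 0 := by simp [Real.pi_ne_zero, Complex.I_ne_zero]
  exact_mod_cast mul_left_cancel₀ h2πI (h.trans (by ring) : 2 * π * I * s = 2 * π * I * (t + m))

lemma expTwoPiI_add_intCast (t : ℝ) (m : ℤ) : expTwoPiI (t + m) = expTwoPiI t :=
  expTwoPiI_eq_expTwoPiI_iff.2 ⟨m, rfl⟩

@[fun_prop]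
lemma continuous_expTwoPiI : Continuous expTwoPiI := by
  unfold expTwoPiI; fun_prop

lemma hasDerivAt_expTwoPiI (t : ℝ) : HasDerivAt expTwoPiI (2 * π * I * expTwoPiI t) t := by
  have h : HasDerivAt (fun w : ℂ => Complex.exp (2 * π * I * w))
      (2 * π * I * Complex.exp (2 * π * I * t)) t := by
    simpa [mul_comm] using ((hasDerivAt_id (t : ℂ)).const_mul (2 * π * I)).cexp
  exact h.comp_ofReal

lemma exists_expTwoPiI_eq {z : ℂ} (hz : ‖z‖ = 1) : ∃ t, expTwoPiI t = z := by
  refine ⟨z.arg / (2 * π), ?_⟩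
  rw [expTwoPiI_eq_exp_mul_I, mul_div_cancel₀ _ (by positivity)]
  simpa [hz] using Complex.norm_mul_exp_arg_mul_I z

lemma eventually_exists_int_abs_sub_lt {α : Type*} {l : Filter α} {x : α → ℝ} {t : ℝ}
    (hx : Tendsto (fun k => expTwoPiI (x k)) l (𝓝 (expTwoPiI t))) {η : ℝ} (hη : 0 < η) :
    ∀ᶠ k in l, ∃ m : ℤ, |x k - m - t| < η := by
  have hball : Complex.exp '' ball (2 * π * I * t) (2 * π * η) ∈ 𝓝 (expTwoPiI t) :=
    Complex.isOpenMap_exp.image_mem_nhds (ball_mem_nhds _ (by positivity))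
  filter_upwards [hx hball] with k ⟨ζ, hζ, hζx⟩
  obtain ⟨m, hm⟩ := Complex.exp_eq_exp_iff_exists_int.1 hζx.symm
  refine ⟨m, ?_⟩
  have h2π : (0 : ℝ) < 2 * π := by positivity
  have hlt : ‖ζ - 2 * π * I * t‖ < 2 * π * η := mem_ball_iff_norm.1 hζ
  rw [show ζ - 2 * π * I * t = ((2 * π * (x k - m - t) : ℝ) : ℂ) * I by
    push_cast; linear_combination -hm] at hlt
  rw [norm_mul, Complex.norm_I, mul_one, Complex.norm_real, Real.norm_eq_abs, abs_mul,
    abs_of_pos h2π] at hlt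
  exact lt_of_mul_lt_mul_left hlt h2π.le

def blaschkeFactor (a z : ℂ) : ℂ := (z - a) / (1 - conj a * z)

section BlaschkeFactor

variable {a w : ℂ}

lemma sub_eq_mul_conj_one_sub_conj_mul (hw : ‖w‖ = 1) (a : ℂ) :
    w - a = w * conj (1 - conj a * w) := by
  have hww : w * conj w = 1 := by rw [Complex.mul_conj', hw]; norm_num
  simp only [map_sub, map_one, map_mul, Complex.conj_conj]
  linear_combination a * hww

lemma one_sub_conj_mul_ne_zero_s9 (ha : ‖a‖ < 1) (hw : ‖w‖ = 1) : 1 - conj a * w ≠ 0 := by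
  intro h
  have : ‖conj a * w‖ = 1 := by rw [← sub_eq_zero.1 h, norm_one]
  rw [norm_mul, Complex.norm_conj, hw, mul_one] at this
  linarith

lemma norm_blaschkeFactor (ha : ‖a‖ < 1) (hw : ‖w‖ = 1) : ‖blaschkeFactor a w‖ = 1 := by
  rw [blaschkeFactor, norm_div, sub_eq_mul_conj_one_sub_conj_mul hw, norm_mul, hw, one_mul,
    Complex.norm_conj, div_self (norm_ne_zero_iff.2 (one_sub_conj_mul_ne_zero_s9 ha hw))]

end BlaschkeFactor

section PoissonKernel

variable {a : ℂ}

lemma expTwoPiI_sub_ne_zero (ha : ‖a‖ < 1) (t : ℝ) : expTwoPiI t - a ≠ 0 := by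
  intro h
  have := norm_expTwoPiI t
  rw [sub_eq_zero.1 h] at this
  linarith

lemma poissonKernel_expTwoPiI_pos (ha : ‖a‖ < 1) (t : ℝ) :
    0 < poissonKernel 0 a (expTwoPiI t) := by
  have hne := expTwoPiI_sub_ne_zero ha t
  have : ‖a‖ ^ 2 < 1 := by nlinarith [norm_nonneg a]
  simp only [poissonKernel_def, sub_zero, norm_expTwoPiI, one_pow]
  exact div_pos (by linarith) (by positivity)

lemma continuous_poissonKernel_expTwoPiI (ha : ‖a‖ < 1) :
    Continuous fun t => poissonKernel 0 a (expTwoPiI t) := by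
  simp only [poissonKernel_def, sub_zero]
  refine Continuous.div (by fun_prop) (by fun_prop) fun t => ?_
  exact pow_ne_zero _ (norm_ne_zero_iff.2 (expTwoPiI_sub_ne_zero ha t))

lemma hasDerivAt_blaschkeFactor_expTwoPiI (ha : ‖a‖ < 1) (t : ℝ) :
    HasDerivAt (fun s => blaschkeFactor a (expTwoPiI s))
      (2 * π * I * poissonKernel 0 a (expTwoPiI t) * blaschkeFactor a (expTwoPiI t)) t := by
  have h := ((hasDerivAt_expTwoPiI t).sub_const a).div
    (((hasDerivAt_expTwoPiI t).const_mul (conj a)).const_sub 1)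
    (one_sub_conj_mul_ne_zero_s9 ha (norm_expTwoPiI t))
  refine h.congr_deriv ?_
  set w := expTwoPiI t
  have hw : ‖w‖ = 1 := norm_expTwoPiI t
  set D := 1 - conj a * w with hD_def
  have hD : D ≠ 0 := one_sub_conj_mul_ne_zero_s9 ha hw
  have hDc : conj D ≠ 0 := (map_ne_zero _).2 hD
  have hwa : w - a = w * conj D := sub_eq_mul_conj_one_sub_conj_mul hw a
  have hden : (‖w - a‖ : ℂ) ^ 2 = D * conj D := by
    rw [hwa, norm_mul, hw, one_mul, Complex.norm_conj, Complex.mul_conj']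
  have hnum : (‖w‖ : ℂ) ^ 2 - (‖a‖ : ℂ) ^ 2 = 1 - conj a * a := by
    rw [hw, Complex.conj_mul']; push_cast; ring
  rw [blaschkeFactor, poissonKernel_def, sub_zero, sub_zero]
  push_cast
  rw [hden, hnum, ← hD_def]
  field_simp
  linear_combination (w * conj D) * hD_def - (1 - a * conj a) * hwa

end PoissonKernel

lemma eq_mul_expTwoPiI_integral {g : ℝ → ℂ} {ρ : ℝ → ℝ} (hρ : Continuous ρ)
    (hg : ∀ t, HasDerivAt g (2 * π * I * ρ t * g t) t) (t : ℝ) :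
    g t = g 0 * expTwoPiI (∫ s in (0 : ℝ)..t, ρ s) := by
  set F := fun t => ∫ s in (0 : ℝ)..t, ρ s
  have hF : ∀ t, HasDerivAt F (ρ t) t := fun t =>
    intervalIntegral.integral_hasDerivAt_right (hρ.intervalIntegrable _ _)
      (hρ.stronglyMeasurableAtFilter _ _) hρ.continuousAt
  have hq : ∀ s, HasDerivAt (fun s => g s * expTwoPiI (-F s)) 0 s := fun s => by
    refine ((hg s).mul ((hasDerivAt_expTwoPiI _).scomp s (hF s).neg)).congr_deriv ?_
    simp only [Complex.real_smul, Function.comp_apply, Pi.neg_apply]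
    push_cast
    ring
  have hconst := is_const_of_deriv_eq_zero (fun s => (hq s).differentiableAt)
    (fun s => (hq s).deriv) t 0
  simp only [F, intervalIntegral.integral_same, neg_zero, expTwoPiI_zero, mul_one] at hconst
  rw [← hconst, mul_assoc, expTwoPiI_neg_mul_self, mul_one]

structure IsCircleLift (g : ℂ → ℂ) (G : ℝ → ℝ) (d : ℕ) : Prop where
  continuous : Continuous G
  monotone : Monotone G
  add_one : ∀ t, G (t + 1) = G t + d
  apply_expTwoPiI : ∀ t, g (expTwoPiI t) = expTwoPiI (G t)

namespace IsCircleLift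

variable {g g₁ g₂ : ℂ → ℂ} {G G₁ G₂ : ℝ → ℝ} {d d₁ d₂ : ℕ}

lemma const (c : ℝ) : IsCircleLift (fun _ => expTwoPiI c) (fun _ => c) 0 :=
  ⟨continuous_const, monotone_const, fun _ => by simp, fun _ => rfl⟩

lemma mul (h₁ : IsCircleLift g₁ G₁ d₁) (h₂ : IsCircleLift g₂ G₂ d₂) :
    IsCircleLift (fun z => g₁ z * g₂ z) (fun t => G₁ t + G₂ t) (d₁ + d₂) where
  continuous := h₁.continuous.add h₂.continuous
  monotone := h₁.monotone.add h₂.monotone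
  add_one t := by rw [h₁.add_one, h₂.add_one]; push_cast; ring
  apply_expTwoPiI t := by rw [h₁.apply_expTwoPiI, h₂.apply_expTwoPiI, expTwoPiI_add]

lemma iterate_apply_expTwoPiI (hG : IsCircleLift g G d) (n : ℕ) (t : ℝ) :
    g^[n] (expTwoPiI t) = expTwoPiI (G^[n] t) := by
  induction n with
  | zero => rfl
  | succ n ih => rw [Function.iterate_succ_apply', ih, hG.apply_expTwoPiI,
      Function.iterate_succ_apply']

lemma mapsTo_sphere (hG : IsCircleLift g G d) : MapsTo g (sphere 0 1) (sphere 0 1) := by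
  intro z hz
  obtain ⟨t, rfl⟩ := exists_expTwoPiI_eq (by simpa using hz)
  rw [hG.apply_expTwoPiI]
  exact expTwoPiI_mem_sphere _

end IsCircleLift

/-- The lift is `c + ∫₀ᵗ P` with `P` the Poisson kernel; its degree `∫₀¹ P` is an integer since
`expTwoPiI` is `1`-periodic, and positive since `P` is. -/
theorem exists_isCircleLift_blaschkeFactor {a : ℂ} (ha : ‖a‖ < 1) :
    ∃ G d, 1 ≤ d ∧ IsCircleLift (blaschkeFactor a) G d := by
  set ρ := fun t => poissonKernel 0 a (expTwoPiI t)
  have hρ : Continuous ρ := continuous_poissonKernel_expTwoPiI ha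
  have hρ_per : Function.Periodic ρ 1 := fun t => by
    simp only [ρ, ← Int.cast_one (R := ℝ), expTwoPiI_add_intCast]
  obtain ⟨c, hc⟩ := exists_expTwoPiI_eq (norm_blaschkeFactor ha (norm_expTwoPiI 0))
  set G := fun t => c + ∫ s in (0 : ℝ)..t, ρ s
  have hG : ∀ t, HasDerivAt G (ρ t) t := fun t =>
    (intervalIntegral.integral_hasDerivAt_right (hρ.intervalIntegrable _ _)
      (hρ.stronglyMeasurableAtFilter _ _) hρ.continuousAt).const_add c
  have hlift : ∀ t, blaschkeFactor a (expTwoPiI t) = expTwoPiI (G t) := fun t => by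
    rw [eq_mul_expTwoPiI_integral hρ (hasDerivAt_blaschkeFactor_expTwoPiI ha) t, ← hc,
      ← expTwoPiI_add]
  have hG_add : ∀ t, G (t + 1) = G t + ∫ s in (0 : ℝ)..1, ρ s := fun t => by
    have hshift := hρ_per.intervalIntegral_add_eq t 0
    rw [zero_add] at hshift
    simp only [G]
    rw [← hshift, add_assoc, intervalIntegral.integral_add_adjacent_intervals
      (hρ.intervalIntegrable _ _) (hρ.intervalIntegrable _ _)]
  obtain ⟨m, hm⟩ : ∃ m : ℤ, G 1 = G 0 + m := by
    rw [← expTwoPiI_eq_expTwoPiI_iff, ← hlift, ← hlift, ← zero_add (1 : ℝ),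
      ← Int.cast_one (R := ℝ), expTwoPiI_add_intCast]
  have hpos : 0 < ∫ s in (0 : ℝ)..1, ρ s :=
    intervalIntegral.intervalIntegral_pos_of_pos (hρ.intervalIntegrable _ _)
      (poissonKernel_expTwoPiI_pos ha) one_pos
  have hdeg : ∫ s in (0 : ℝ)..1, ρ s = m := by
    have h01 := hG_add 0
    rw [zero_add] at h01
    linarith
  lift m to ℕ using by exact_mod_cast (hdeg ▸ hpos).le
  refine ⟨G, m, by exact_mod_cast hdeg ▸ hpos, ⟨?_, ?_, ?_, hlift⟩⟩
  · exact continuous_iff_continuousAt.2 fun t => (hG t).continuousAt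
  · exact monotone_of_hasDerivAt_nonneg hG fun t => (poissonKernel_expTwoPiI_pos ha t).le
  · intro t
    rw [hG_add, hdeg]
    rfl

theorem IsBlaschkeOf.exists_isCircleLift {N : ℕ} {φ : ℂ → ℂ} (hφ : IsBlaschkeOf N φ) :
    ∃ G d, N ≤ d ∧ IsCircleLift φ G d := by
  obtain ⟨u, a, hu, ha, hφ⟩ := hφ
  have hprod : ∀ s : Finset (Fin N), ∃ G d, s.card ≤ d ∧
      IsCircleLift (fun z => ∏ i ∈ s, blaschkeFactor (a i) z) G d := by
    intro s
    induction s using Finset.induction_on with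
    | empty => exact ⟨fun _ => 0, 0, le_rfl, by simpa using IsCircleLift.const 0⟩
    | insert j s hj ih =>
      obtain ⟨G, d, hd, hG⟩ := ih
      obtain ⟨G', d', hd', hG'⟩ := exists_isCircleLift_blaschkeFactor (ha j)
      refine ⟨_, d' + d, ?_, by simpa only [Finset.prod_insert hj] using hG'.mul hG⟩
      rw [Finset.card_insert_of_notMem hj]
      omega
  obtain ⟨G, d, hd, hG⟩ := hprod Finset.univ
  obtain ⟨c, hc⟩ := exists_expTwoPiI_eq hu
  have hφ' : φ = fun z => expTwoPiI c * ∏ i, blaschkeFactor (a i) z :=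
    funext fun z => by rw [hφ z, hc]; rfl
  refine ⟨_, 0 + d, ?_, hφ' ▸ (IsCircleLift.const c).mul hG⟩
  simpa using hd

theorem NontrivialBlaschke.exists_isCircleLift {φ : ℂ → ℂ} (hφ : NontrivialBlaschke φ) :
    ∃ G d, 2 ≤ d ∧ IsCircleLift φ G d := by
  obtain ⟨N, hN, hφN⟩ := hφ
  obtain ⟨G, d, hd, hG⟩ := hφN.exists_isCircleLift
  exact ⟨G, d, hN.trans hd, hG⟩

lemma Monotone.eq_of_forall_exists_iterate_near {f : ℝ → ℝ} (hf : Monotone f) {x : ℝ}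
    (hx : ∀ η > 0, ∃ q ≥ 1, |f^[q] x - x| < η) : f x = x := by
  by_contra hne
  rcases lt_or_gt_of_ne hne with hlt | hgt
  · obtain ⟨q, hq, hη⟩ := hx (x - f x) (by linarith)
    have : f^[q] x ≤ f^[1] x := hf.antitone_iterate_of_map_le hlt.le hq
    rw [abs_lt] at hη
    simp only [Function.iterate_one] at this
    linarith
  · obtain ⟨q, hq, hη⟩ := hx (f x - x) (by linarith)
    have : f^[1] x ≤ f^[q] x := hf.monotone_iterate_of_le_map hgt.le hq
    rw [abs_lt] at hη
    simp only [Function.iterate_one] at this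
    linarith

lemma IsCompact.exists_mem_Icc_isFixedPt_of_mapsTo {K : Set ℝ} (hK : IsCompact K)
    (hne : K.Nonempty) {f : ℝ → ℝ} (hf : Continuous f) (hmaps : MapsTo f K K) :
    ∃ x ∈ Icc (sInf K) (sSup K), IsFixedPt f x :=
  exists_mem_Icc_isFixedPt hf.continuousOn
    (csInf_le_csSup hne hK.bddBelow hK.bddAbove : sInf K ≤ sSup K)
    (csInf_le hK.bddBelow (hmaps (hK.sInf_mem hne)) : sInf K ≤ f (sInf K))
    (le_csSup hK.bddAbove (hmaps (hK.sSup_mem hne)) : f (sSup K) ≤ sSup K)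

lemma exists_mem_Ioo_pow_mul_eq_add_intCast {d : ℕ} (hd : 2 ≤ d) {a b : ℝ} (hab : a < b) :
    ∃ p ≥ 1, ∃ j : ℤ, ∃ s ∈ Ioo a b, (d : ℝ) ^ p * s = s + j := by
  have hd' : (1 : ℝ) < d := by exact_mod_cast hd
  obtain ⟨p, hp⟩ := pow_unbounded_of_one_lt (1 / (b - a) + 1) hd'
  have hba : 0 < b - a := by linarith
  set M := (d : ℝ) ^ p - 1
  have hM : 1 < (b - a) * M := by
    rw [← div_lt_iff₀' hba]
    linarith
  have hM0 : 0 < M := pos_of_mul_pos_right (one_pos.trans hM) hba.le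
  have hp1 : 1 ≤ p := by
    by_contra! h
    simp [Nat.lt_one_iff.1 h, M] at hM0
  set j := ⌊a * M⌋ + 1
  refine ⟨p, hp1, j, j / M, ⟨?_, ?_⟩, ?_⟩
  · rw [lt_div_iff₀ hM0]
    exact_mod_cast Int.lt_floor_add_one (a * M)
  · rw [div_lt_iff₀ hM0]
    have : (j : ℝ) ≤ a * M + 1 := by push_cast [j]; linarith [Int.floor_le (a * M)]
    nlinarith
  · field_simp
    ring

lemma isPeriodicPt_nsmul_iff {d n : ℕ} {s : ℝ} :
    IsPeriodicPt (fun x : AddCircle (1 : ℝ) => d • x) n s ↔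
      ∃ m : ℤ, (d : ℝ) ^ n * s = s + m := by
  rw [IsPeriodicPt, IsFixedPt, smul_iterate_apply, ← AddCircle.coe_nsmul, ← sub_eq_zero,
    ← AddCircle.coe_sub, AddCircle.coe_eq_zero_iff]
  refine exists_congr fun m => ?_
  simp only [zsmul_eq_mul, mul_one, nsmul_eq_mul, Nat.cast_pow]
  constructor <;> intro h <;> linarith

def IsRecurrentModOne (G : ℝ → ℝ) (t : ℝ) : Prop :=
  ∀ η > 0, ∃ n ≥ 1, ∃ m : ℤ, |G^[n] t - m - t| < η

section Lift

variable {G : ℝ → ℝ} {d : ℕ}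

lemma add_intCast_of_add_one (hG : ∀ t, G (t + 1) = G t + d) (t : ℝ) (m : ℤ) :
    G (t + m) = G t + d * m := by
  have hper : Function.Periodic (fun x => G x - d * x) 1 := fun x => by simp only [hG]; ring
  have := hper.int_mul m t
  simp only [mul_one] at this
  linarith

lemma iterate_add_intCast_of_add_one (hG : ∀ t, G (t + 1) = G t + d) (n : ℕ) (t : ℝ)
    (m : ℤ) : G^[n] (t + m) = G^[n] t + d ^ n * m := by
  induction n with
  | zero => simp
  | succ n ih =>
    have := add_intCast_of_add_one hG (G^[n] t) (d ^ n * m)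
    push_cast at this
    rw [Function.iterate_succ_apply', Function.iterate_succ_apply', ih, this, pow_succ]
    ring

lemma iterate_sub_intCast_of_add_one (hG : ∀ t, G (t + 1) = G t + d) (n : ℕ) (t : ℝ)
    (m : ℤ) : G^[n] (t - m) = G^[n] t - d ^ n * m := by
  have := iterate_add_intCast_of_add_one hG n t (-m)
  push_cast at this
  rw [sub_eq_add_neg, this]
  ring

lemma exists_forall_abs_sub_mul_le (hc : Continuous G) (hG : ∀ t, G (t + 1) = G t + d) :
    ∃ C, ∀ x, |G x - d * x| ≤ C := by
  have hper : Function.Periodic (fun x => G x - d * x) 1 := fun x => by simp only [hG]; ring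
  obtain ⟨C, hC⟩ := isBounded_iff_forall_norm_le.1 (hper.isBounded_of_continuous one_ne_zero
    (by fun_prop))
  exact ⟨C, fun x => hC _ (mem_range_self x)⟩

lemma abs_sub_mul_div_pow_le {C : ℝ} (hC : ∀ x, |G x - d * x| ≤ C) (hd : 2 ≤ d) (x : ℝ)
    (n : ℕ) : |(G x - d * x) / d ^ (n + 1)| ≤ C * (1 / 2) ^ n := by
  have hC0 : 0 ≤ C := (abs_nonneg _).trans (hC 0)
  have hd' : (2 : ℝ) ≤ d := by exact_mod_cast hd
  have h2d : (2 : ℝ) ^ n ≤ d ^ (n + 1) :=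
    (pow_le_pow_left₀ zero_le_two hd' n).trans (pow_le_pow_right₀ (by linarith) n.le_succ)
  rw [abs_div, abs_of_pos (by positivity : (0 : ℝ) < d ^ (n + 1)), one_div, inv_pow,
    ← div_eq_mul_inv]
  exact (div_le_div_of_nonneg_right (hC x) (by positivity)).trans
    (div_le_div_of_nonneg_left hC0 (by positivity) h2d)

lemma iterate_div_pow_eq_add_sum (hd : d ≠ 0) (n : ℕ) (t : ℝ) :
    G^[n] t / d ^ n = t + ∑ k ∈ Finset.range n, (G (G^[k] t) - d * G^[k] t) / d ^ (k + 1) := by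
  induction n with
  | zero => simp
  | succ n ih =>
    rw [Finset.sum_range_succ, ← add_assoc, ← ih, Function.iterate_succ_apply']
    field_simp
    ring

end Lift

/-- The semiconjugacy of a degree-`d` lift `G` to multiplication by `d`: it is
`lim G^[n] t / d ^ n`, written as a telescoping series. -/
def linearization (G : ℝ → ℝ) (d : ℕ) (t : ℝ) : ℝ :=
  t + ∑' n : ℕ, (G (G^[n] t) - d * G^[n] t) / d ^ (n + 1)

section Linearization

variable {G : ℝ → ℝ} {d : ℕ}

lemma tendsto_iterate_div_pow_linearization (hc : Continuous G)
    (hG : ∀ t, G (t + 1) = G t + d) (hd : 2 ≤ d) (t : ℝ) :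
    Tendsto (fun n => G^[n] t / d ^ n) atTop (𝓝 (linearization G d t)) := by
  obtain ⟨C, hC⟩ := exists_forall_abs_sub_mul_le hc hG
  have hsum : Summable fun n => (G (G^[n] t) - d * G^[n] t) / d ^ (n + 1) :=
    Summable.of_norm_bounded (summable_geometric_two.mul_left C)
      fun n => abs_sub_mul_div_pow_le hC hd _ n
  simp only [iterate_div_pow_eq_add_sum (by omega : d ≠ 0)]
  exact hsum.hasSum.tendsto_sum_nat.const_add t

lemma continuous_linearization (hc : Continuous G) (hG : ∀ t, G (t + 1) = G t + d)
    (hd : 2 ≤ d) : Continuous (linearization G d) := by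
  obtain ⟨C, hC⟩ := exists_forall_abs_sub_mul_le hc hG
  refine continuous_id.add (continuous_tsum (fun n => ?_) (summable_geometric_two.mul_left C)
    fun n t => abs_sub_mul_div_pow_le hC hd _ n)
  have := hc.iterate n
  fun_prop

lemma monotone_linearization (hc : Continuous G) (hm : Monotone G)
    (hG : ∀ t, G (t + 1) = G t + d) (hd : 2 ≤ d) : Monotone (linearization G d) :=
  fun _ _ hst => le_of_tendsto_of_tendsto' (tendsto_iterate_div_pow_linearization hc hG hd _)
    (tendsto_iterate_div_pow_linearization hc hG hd _)
    fun n => div_le_div_of_nonneg_right (hm.iterate n hst) (by positivity)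

lemma linearization_iterate_sub_intCast (hc : Continuous G) (hG : ∀ t, G (t + 1) = G t + d)
    (hd : 2 ≤ d) (n : ℕ) (t : ℝ) (m : ℤ) :
    linearization G d (G^[n] t - m) = d ^ n * linearization G d t - m := by
  refine tendsto_nhds_unique (tendsto_iterate_div_pow_linearization hc hG hd _) ?_
  have hlim := ((tendsto_iterate_div_pow_linearization hc hG hd t).comp
    (tendsto_add_atTop_nat n)).const_mul ((d : ℝ) ^ n) |>.sub_const (m : ℝ)
  refine hlim.congr fun k => ?_
  have hd0 : (d : ℝ) ≠ 0 := by norm_cast; omega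
  simp only [Function.comp_apply]
  rw [Function.iterate_add_apply, iterate_sub_intCast_of_add_one hG, pow_add]
  field_simp

lemma iterate_iterate_sub_intCast (hG : ∀ t, G (t + 1) = G t + d) {r : ℕ} {s : ℝ} {c : ℤ}
    (hc : (d : ℝ) ^ r * s = s + c) (q : ℕ) (x : ℝ) :
    ∃ k : ℤ, (k : ℝ) = d ^ (r * q) * s - s ∧ (fun y => G^[r] y - c)^[q] x = G^[r * q] x - k := by
  induction q with
  | zero => exact ⟨0, by simp, by simp⟩
  | succ q ih =>
    obtain ⟨k, hk, hq⟩ := ih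
    refine ⟨d ^ r * k + c, ?_, ?_⟩
    · rw [mul_add, mul_one, pow_add]
      push_cast
      linear_combination (d : ℝ) ^ r * hk - hc
    · rw [Function.iterate_succ_apply', hq, iterate_sub_intCast_of_add_one hG,
        ← Function.iterate_add_apply, mul_add, mul_one, add_comm r]
      push_cast
      ring

/-- The fibre of the linearization over a point of period `p` of `x ↦ d x` modulo `1` lying
between its values at `a` and `b` is a compact subset of `[a, b]` mapped into itself by
`G^[p] - j`. -/
theorem exists_iterate_eq_add_intCast_of_linearization_lt (hc : Continuous G) (hm : Monotone G)
    (hG : ∀ t, G (t + 1) = G t + d) (hd : 2 ≤ d) {a b : ℝ}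
    (hab : linearization G d a < linearization G d b) :
    ∃ p ≥ 1, ∃ x ∈ Icc a b, ∃ j : ℤ, G^[p] x = x + j := by
  have hlin_mono := monotone_linearization hc hm hG hd
  have hlin_cont := continuous_linearization hc hG hd
  obtain ⟨p, hp, j, s, ⟨has, hsb⟩, hs⟩ := exists_mem_Ioo_pow_mul_eq_add_intCast hd hab
  set K := linearization G d ⁻¹' {s}
  have hK_sub : K ⊆ Icc a b := fun x (hx : linearization G d x = s) =>
    ⟨(hlin_mono.reflect_lt (hx ▸ has)).le, (hlin_mono.reflect_lt (hx ▸ hsb)).le⟩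
  have hK_ne : K.Nonempty := by
    obtain ⟨x, -, hx⟩ := intermediate_value_Icc (hlin_mono.reflect_lt hab).le
      hlin_cont.continuousOn ⟨has.le, hsb.le⟩
    exact ⟨x, hx⟩
  have hK : IsCompact K :=
    isCompact_Icc.of_isClosed_subset (isClosed_singleton.preimage hlin_cont) hK_sub
  have hmaps : MapsTo (fun x => G^[p] x - j) K K := fun x (hx : linearization G d x = s) => by
    show linearization G d (G^[p] x - j) = s
    rw [linearization_iterate_sub_intCast hc hG hd, hx, hs, add_sub_cancel_right]
  obtain ⟨x, hxK, hx⟩ := hK.exists_mem_Icc_isFixedPt_of_mapsTo hK_ne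
    (show Continuous fun x => G^[p] x - j from (hc.iterate p).sub continuous_const) hmaps
  have hx' : G^[p] x - j = x := hx
  refine ⟨p, hp, x, ?_, j, by linarith⟩
  exact ⟨(hK_sub (hK.sInf_mem hK_ne)).1.trans hxK.1, hxK.2.trans (hK_sub (hK.sSup_mem hK_ne)).2⟩

/-- Returns of `t` close to `t` happen only at multiples of the minimal period `r` of
`linearization G d t` under `x ↦ d x` modulo `1`, and are then iterates of `t` under the monotone
map `G^[r] - c`; a recurrent point of a monotone map of `ℝ` is fixed. -/
theorem exists_iterate_eq_add_intCast_of_linearization_eq (hc : Continuous G) (hm : Monotone G)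
    (hG : ∀ t, G (t + 1) = G t + d) (hd : 2 ≤ d) {t δ : ℝ} (hδ : 0 < δ)
    (hconst : ∀ x ∈ Icc (t - δ) (t + δ), linearization G d x = linearization G d t)
    (ht : IsRecurrentModOne G t) :
    ∃ r ≥ 1, ∃ c : ℤ, G^[r] t = t + c := by
  set s := linearization G d t
  have hret : ∀ n (m : ℤ), |G^[n] t - m - t| < δ → (d : ℝ) ^ n * s = s + m := fun n m hnm => by
    rw [abs_lt] at hnm
    have := hconst (G^[n] t - m) ⟨by linarith, by linarith⟩
    rw [linearization_iterate_sub_intCast hc hG hd] at this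
    linarith
  set T := fun x : AddCircle (1 : ℝ) => d • x
  obtain ⟨n₀, hn₀, m₀, h₀⟩ := ht δ hδ
  have hr : 0 < minimalPeriod T s :=
    (isPeriodicPt_nsmul_iff.2 ⟨m₀, hret _ _ h₀⟩).minimalPeriod_pos hn₀
  set r := minimalPeriod T s
  obtain ⟨c, hc⟩ := isPeriodicPt_nsmul_iff.1 (isPeriodicPt_minimalPeriod T s)
  have hshift_mono : Monotone fun y => G^[r] y - c := fun x y hxy => by
    simpa using hm.iterate r hxy
  refine ⟨r, hr, c, ?_⟩
  suffices (fun y => G^[r] y - c) t = t by linarith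
  refine hshift_mono.eq_of_forall_exists_iterate_near fun η hη => ?_
  obtain ⟨n, hn, m, hnm⟩ := ht (min η δ) (lt_min hη hδ)
  have hsn := hret n m (hnm.trans_le (min_le_right _ _))
  obtain ⟨q, rfl⟩ := (isPeriodicPt_nsmul_iff.2 ⟨m, hsn⟩).minimalPeriod_dvd
  obtain ⟨k, hk, horbit⟩ := iterate_iterate_sub_intCast hG hc q t
  have hkm : (k : ℝ) = m := by rw [hk, hsn]; ring
  refine ⟨q, Nat.pos_of_ne_zero fun hq => by simp [hq] at hn, ?_⟩
  rw [horbit, hkm]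
  exact hnm.trans_le (min_le_left _ _)

theorem exists_iterate_eq_add_intCast_near (hc : Continuous G) (hm : Monotone G)
    (hG : ∀ t, G (t + 1) = G t + d) (hd : 2 ≤ d) {t δ : ℝ} (hδ : 0 < δ)
    (ht : IsRecurrentModOne G t) :
    ∃ p ≥ 1, ∃ x ∈ Icc (t - δ) (t + δ), ∃ m : ℤ, G^[p] x = x + m := by
  have hlin_mono := monotone_linearization hc hm hG hd
  rcases (hlin_mono (by linarith : t - δ ≤ t + δ)).lt_or_eq with hlt | heq
  · exact exists_iterate_eq_add_intCast_of_linearization_lt hc hm hG hd hlt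
  · have hconst : ∀ x ∈ Icc (t - δ) (t + δ), linearization G d x = linearization G d t :=
      fun x hx => by
        have := hlin_mono (by linarith : t - δ ≤ t)
        have := hlin_mono (by linarith : t ≤ t + δ)
        linarith [hlin_mono hx.1, hlin_mono hx.2]
    obtain ⟨r, hr, c, hrc⟩ :=
      exists_iterate_eq_add_intCast_of_linearization_eq hc hm hG hd hδ hconst ht
    exact ⟨r, hr, t, ⟨by linarith, by linarith⟩, c, hrc⟩

end Linearization

theorem IsCircleLift.exists_iterate_eq_ne_zero_of_recurrentPt {φ f : ℂ → ℂ} {G : ℝ → ℝ} {d : ℕ}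
    (hφ : IsCircleLift φ G d) (hd : 2 ≤ d) {z : ℂ} (hz : RecurrentPt φ z)
    (hf : ContinuousOn f (sphere 0 1)) (hfz : f z ≠ 0) :
    ∃ n : ℕ, 1 ≤ n ∧ ∃ x₀ ∈ sphere (0 : ℂ) 1, φ^[n] x₀ = x₀ ∧ f x₀ ≠ 0 := by
  obtain ⟨hz1, ns, -, hns, hlim⟩ := hz
  obtain ⟨t, rfl⟩ := exists_expTwoPiI_eq (by simpa using hz1)
  have hrec : IsRecurrentModOne G t := fun η hη => by
    simp only [hφ.iterate_apply_expTwoPiI] at hlim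
    obtain ⟨k, m, hm⟩ := (eventually_exists_int_abs_sub_lt hlim hη).exists
    exact ⟨ns k, hns k, m, hm⟩
  have hfe : ∀ᶠ x in 𝓝 t, f (expTwoPiI x) ≠ 0 :=
    (hf.comp_continuous continuous_expTwoPiI expTwoPiI_mem_sphere).continuousAt.eventually_ne hfz
  obtain ⟨δ, hδ, hδf⟩ := nhds_basis_closedBall.eventually_iff.1 hfe
  obtain ⟨p, hp, x, hx, m, hxm⟩ :=
    exists_iterate_eq_add_intCast_near hφ.continuous hφ.monotone hφ.add_one hd hδ hrec
  refine ⟨p, hp, expTwoPiI x, expTwoPiI_mem_sphere x, ?_, hδf (Real.closedBall_eq_Icc ▸ hx)⟩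
  rw [hφ.iterate_apply_expTwoPiI, hxm, expTwoPiI_add_intCast]

theorem le_liminf_sSup_prod_iterate_rpow {X : Type*} {T : X → X} {s : Set X} {g : X → ℝ}
    (hT : MapsTo T s s) (hg : 0 ≤ g) (hgs : BddAbove (g '' s)) {x₀ : X} (hx₀ : x₀ ∈ s)
    (hfix : T x₀ = x₀) :
    g x₀ ≤ liminf (fun k : ℕ =>
      (sSup ((fun x => ∏ j ∈ Finset.range k, g (T^[j] x)) '' s)) ^ ((1 : ℝ) / k)) atTop := by
  obtain ⟨C, hC⟩ := hgs
  have hC' : ∀ x ∈ s, g x ≤ C := fun x hx => hC (mem_image_of_mem g hx)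
  set P := fun (k : ℕ) x => ∏ j ∈ Finset.range k, g (T^[j] x)
  have hP_le : ∀ k, ∀ x ∈ s, P k x ≤ C ^ k := fun k x hx =>
    calc P k x ≤ ∏ _j ∈ Finset.range k, C :=
          Finset.prod_le_prod (fun j _ => hg _) fun j _ => hC' _ (hT.iterate j hx)
      _ = C ^ k := by simp
  have hP_x₀ : ∀ k, P k x₀ = g x₀ ^ k := fun k => by
    simp [P, Function.iterate_fixed hfix]
  have hbdd : ∀ k, BddAbove (P k '' s) := fun k => ⟨C ^ k, forall_mem_image.2 (hP_le k)⟩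
  have hlower : ∀ k, g x₀ ^ k ≤ sSup (P k '' s) := fun k =>
    hP_x₀ k ▸ le_csSup (hbdd k) (mem_image_of_mem _ hx₀)
  have hupper : ∀ k, sSup (P k '' s) ≤ C ^ k := fun k =>
    csSup_le (image_nonempty.2 ⟨x₀, hx₀⟩) (forall_mem_image.2 (hP_le k))
  have hroot : ∀ {k : ℕ} {y : ℝ}, 1 ≤ k → 0 ≤ y → (y ^ k) ^ ((1 : ℝ) / k) = y := fun hk hy => by
    rw [one_div, Real.pow_rpow_inv_natCast hy (by omega)]
  have hg₀ : 0 ≤ g x₀ := hg x₀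
  have hC0 : 0 ≤ C := hg₀.trans (hC' x₀ hx₀)
  refine le_liminf_of_le (isBoundedUnder_of_eventually_le (a := C) ?_).isCoboundedUnder_ge ?_
  · filter_upwards [eventually_ge_atTop 1] with k hk
    calc _ ≤ (C ^ k) ^ ((1 : ℝ) / k) :=
          Real.rpow_le_rpow ((pow_nonneg hg₀ k).trans (hlower k)) (hupper k) (by positivity)
      _ = C := hroot hk hC0
  · filter_upwards [eventually_ge_atTop 1] with k hk
    calc g x₀ = (g x₀ ^ k) ^ ((1 : ℝ) / k) := (hroot hk hg₀).symm
      _ ≤ _ := Real.rpow_le_rpow (pow_nonneg hg₀ k) (hlower k) (by positivity)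

/-- if `f ∈ A(𝔻)` does not vanish identically on the recurrent points of a
nontrivial finite Blaschke product `φ`, then `f` is nonzero at some periodic point on `𝕋`,
and consequently for some period `n ≥ 1` the corresponding liminf is positive. -/
theorem nonvanishing_on_recurrent (φ f : ℂ → ℂ) (hφ : NontrivialBlaschke φ)
    (hf : MemDiskAlgebra f) (hnv : ∃ z : ℂ, RecurrentPt φ z ∧ f z ≠ 0) :
    (∃ n : ℕ, 1 ≤ n ∧ ∃ x₀ ∈ sphere (0 : ℂ) 1, φ^[n] x₀ = x₀ ∧ f x₀ ≠ 0) ∧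
    (∃ n : ℕ, 1 ≤ n ∧
      0 < Filter.liminf (fun k : ℕ =>
        (sSup ((fun x => ∏ j ∈ Finset.range k, ‖f (φ^[j * n] x)‖) ''
          sphere (0 : ℂ) 1)) ^ ((1 : ℝ) / k)) Filter.atTop) := by
  obtain ⟨z, hz, hfz⟩ := hnv
  obtain ⟨G, d, hd, hφG⟩ := hφ.exists_isCircleLift
  have hf_sphere : ContinuousOn f (sphere 0 1) := hf.1.mono sphere_subset_closedBall
  have hper := hφG.exists_iterate_eq_ne_zero_of_recurrentPt hd hz hf_sphere hfz
  refine ⟨hper, ?_⟩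
  obtain ⟨n, hn, x₀, hx₀, hfix, hfx₀⟩ := hper
  refine ⟨n, hn, (norm_pos_iff.2 hfx₀).trans_le ?_⟩
  simp_rw [mul_comm _ n, Function.iterate_mul]
  exact le_liminf_sSup_prod_iterate_rpow (hφG.mapsTo_sphere.iterate n) (fun _ => norm_nonneg _)
    (isCompact_sphere 0 1 |>.bddAbove_image hf_sphere.norm) hx₀ hfix
end
end
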